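/- Let V₁, V₂ be closed subspaces of a Hilbert space with Friedrichs angle φ = ∠(V₁,V₂) ∈ (0, π/2]. For w ∈ H, let w₀ and w₁ be the orthogonal projections of w onto V₁ ∩ V₂ and V₁ respectively, and d₁(w), d₂(w) the distances from w to V₁, V₂. Then ‖w₁ − w₀‖ ≤ (cos φ · d₁(w) + d₂(w)) / sin φ. -/

import Mathlib

open scoped RealInnerProductSpace

/-- The cosine of the Friedrichs angle between two subspaces. -/
noncomputable def friedrichsCos {H : Type*} [NormedAddCommGroup H] [InnerProductSpace ℝ H]
    (V₁ V₂ : Submodule ℝ H) : ℝ :=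
  sSup {r : ℝ | ∃ v₁ v₂ : H, v₁ ∈ V₁ ∧ v₂ ∈ V₂ ∧ ‖v₁‖ = 1 ∧ ‖v₂‖ = 1 ∧
    v₁ ∈ (V₁ ⊓ V₂)ᗮ ∧ v₂ ∈ (V₁ ⊓ V₂)ᗮ ∧ r = |⟪v₁, v₂⟫|}

/-!
Write `u = w₁ - w₀`, which lies in `V₁ ∩ (V₁ ∩ V₂)ᗮ`, and `g = u - P_{V₂} u`. The angle condition
gives `‖P_{V₂} u‖ ≤ cos φ ‖u‖`, hence `sin φ ‖u‖ ≤ ‖g‖`. With `w₂ = P_{V₂} w`,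
`‖g‖² = ⟪g, w - w₂⟫ + ⟪g, w₁ - w⟫` because `g ⊥ V₂`; the first term is at most `‖g‖ d₂`, and since
`w₁ - w ⊥ V₁` the second is at most `dist(g, V₁) d₁ ≤ cos φ ‖g‖ d₁`.
-/

namespace Submodule

variable {H : Type*} [NormedAddCommGroup H] [InnerProductSpace ℝ H]

theorem infDist_eq_norm_sub_starProjection (K : Submodule ℝ H) [K.HasOrthogonalProjection]
    (w : H) : Metric.infDist w (K : Set H) = ‖w - K.starProjection w‖ := by
  rw [Metric.infDist_eq_iInf, starProjection_minimal]
  simp_rw [dist_eq_norm]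
  rfl

theorem norm_sq_sub_starProjection (K : Submodule ℝ H) [K.HasOrthogonalProjection] (x : H) :
    ‖x - K.starProjection x‖ ^ 2 = ‖x‖ ^ 2 - ‖K.starProjection x‖ ^ 2 := by
  have := K.norm_sq_eq_add_norm_sq_starProjection x
  rw [starProjection_orthogonal_val] at this
  linarith

theorem inner_starProjection_right_eq_norm_sq (K : Submodule ℝ H) [K.HasOrthogonalProjection]
    (x : H) : ⟪x, K.starProjection x⟫ = ‖K.starProjection x‖ ^ 2 := by
  rw [← real_inner_self_eq_norm_sq, K.inner_starProjection_left_eq_right,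
    K.starProjection_eq_self_iff.mpr (K.starProjection_apply_mem x)]

theorem starProjection_mem_orthogonal_of_le {U K : Submodule ℝ H} [K.HasOrthogonalProjection]
    (hUK : U ≤ K) {x : H} (hx : x ∈ Uᗮ) : K.starProjection x ∈ Uᗮ := by
  simpa using Uᗮ.sub_mem hx (orthogonal_le hUK (K.sub_starProjection_mem_orthogonal x))

theorem starProjection_sub_starProjection_mem_orthogonal {U K : Submodule ℝ H}
    [U.HasOrthogonalProjection] [K.HasOrthogonalProjection] (hUK : U ≤ K) (w : H) :
    K.starProjection w - U.starProjection w ∈ Uᗮ := by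
  simpa using Uᗮ.sub_mem (U.sub_starProjection_mem_orthogonal w)
    (orthogonal_le hUK (K.sub_starProjection_mem_orthogonal w))

end Submodule

section FriedrichsAngle

open Submodule

variable {H : Type*} [NormedAddCommGroup H] [InnerProductSpace ℝ H] {V₁ V₂ : Submodule ℝ H}

theorem friedrichsCos_nonneg (V₁ V₂ : Submodule ℝ H) : 0 ≤ friedrichsCos V₁ V₂ :=
  Real.sSup_nonneg fun _ ⟨_, _, _, _, _, _, _, _, hr⟩ => hr ▸ abs_nonneg _

theorem abs_inner_le_friedrichsCos_mul {x y : H} (hx₁ : x ∈ V₁) (hx : x ∈ (V₁ ⊓ V₂)ᗮ)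
    (hy₂ : y ∈ V₂) (hy : y ∈ (V₁ ⊓ V₂)ᗮ) :
    |⟪x, y⟫| ≤ friedrichsCos V₁ V₂ * (‖x‖ * ‖y‖) := by
  rcases eq_or_ne x 0 with rfl | hx0
  · simp
  rcases eq_or_ne y 0 with rfl | hy0
  · simp
  have hunit : |⟪‖x‖⁻¹ • x, ‖y‖⁻¹ • y⟫| ≤ friedrichsCos V₁ V₂ := by
    refine le_csSup ⟨1, ?_⟩ ⟨_, _, V₁.smul_mem _ hx₁, V₂.smul_mem _ hy₂, norm_smul_inv_norm hx0,
      norm_smul_inv_norm hy0, smul_mem _ _ hx, smul_mem _ _ hy, rfl⟩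
    rintro r ⟨v₁, v₂, -, -, h₁, h₂, -, -, rfl⟩
    simpa [h₁, h₂] using abs_real_inner_le_norm v₁ v₂
  calc |⟪x, y⟫| = ‖x‖ * ‖y‖ * |⟪‖x‖⁻¹ • x, ‖y‖⁻¹ • y⟫| := by
        rw [real_inner_smul_left, real_inner_smul_right, abs_mul, abs_mul, abs_inv, abs_inv,
          abs_norm, abs_norm]
        field_simp
    _ ≤ friedrichsCos V₁ V₂ * (‖x‖ * ‖y‖) := by rw [mul_comm]; gcongr

theorem norm_starProjection_le_friedrichsCos_mul [V₂.HasOrthogonalProjection] {x : H}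
    (hx₁ : x ∈ V₁) (hx : x ∈ (V₁ ⊓ V₂)ᗮ) :
    ‖V₂.starProjection x‖ ≤ friedrichsCos V₁ V₂ * ‖x‖ := by
  set p := V₂.starProjection x
  have hp : p ∈ (V₁ ⊓ V₂)ᗮ := starProjection_mem_orthogonal_of_le inf_le_right hx
  have hsq : ‖p‖ ^ 2 ≤ friedrichsCos V₁ V₂ * ‖x‖ * ‖p‖ := by
    rw [← V₂.inner_starProjection_right_eq_norm_sq, mul_assoc]
    exact (le_abs_self _).trans
      (abs_inner_le_friedrichsCos_mul hx₁ hx (V₂.starProjection_apply_mem x) hp)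
  have := mul_nonneg (friedrichsCos_nonneg V₁ V₂) (norm_nonneg x)
  nlinarith [norm_nonneg p]

theorem sin_mul_norm_le_norm_sub_starProjection [V₂.HasOrthogonalProjection] {φ : ℝ}
    (hcos : Real.cos φ = friedrichsCos V₁ V₂) (hsin : 0 ≤ Real.sin φ) {x : H}
    (hx₁ : x ∈ V₁) (hx : x ∈ (V₁ ⊓ V₂)ᗮ) :
    Real.sin φ * ‖x‖ ≤ ‖x - V₂.starProjection x‖ := by
  have hp := norm_starProjection_le_friedrichsCos_mul hx₁ hx
  rw [← hcos] at hp
  rw [← pow_le_pow_iff_left₀ (by positivity) (norm_nonneg _) two_ne_zero,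
    V₂.norm_sq_sub_starProjection, mul_pow, Real.sin_sq]
  nlinarith [pow_le_pow_left₀ (norm_nonneg _) hp 2]

/- The left side is the distance from `x - V₂.starProjection x` to `V₁`. -/
theorem norm_sub_starProjection_starProjection_le [V₁.HasOrthogonalProjection]
    [V₂.HasOrthogonalProjection] {x : H} (hx₁ : x ∈ V₁) (hx : x ∈ (V₁ ⊓ V₂)ᗮ) :
    ‖V₂.starProjection x - V₁.starProjection (V₂.starProjection x)‖ ≤
      friedrichsCos V₁ V₂ * ‖x - V₂.starProjection x‖ := by
  set c := friedrichsCos V₁ V₂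
  set p := V₂.starProjection x
  set r := V₁.starProjection p
  rcases eq_or_ne x 0 with rfl | hx0
  · simp [p, r]
  have hpx : ‖p‖ ≤ c * ‖x‖ := norm_starProjection_le_friedrichsCos_mul hx₁ hx
  have hrx : ‖p‖ ^ 2 ≤ ‖r‖ * ‖x‖ :=
    calc ‖p‖ ^ 2 = ⟪r, x⟫ := by
          rw [← V₂.inner_starProjection_right_eq_norm_sq, real_inner_comm,
            V₁.inner_starProjection_left_eq_right, V₁.starProjection_eq_self_iff.mpr hx₁]
      _ ≤ ‖r‖ * ‖x‖ := real_inner_le_norm r x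
  have hxpos : 0 < ‖x‖ ^ 2 := by positivity
  rw [← pow_le_pow_iff_left₀ (norm_nonneg _)
    (mul_nonneg (friedrichsCos_nonneg V₁ V₂) (norm_nonneg _)) two_ne_zero,
    ← mul_le_mul_iff_right₀ hxpos]
  calc ‖x‖ ^ 2 * ‖p - r‖ ^ 2 = ‖x‖ ^ 2 * ‖p‖ ^ 2 - (‖r‖ * ‖x‖) ^ 2 := by
        rw [V₁.norm_sq_sub_starProjection]; ring
    _ ≤ ‖x‖ ^ 2 * ‖p‖ ^ 2 - (‖p‖ ^ 2) ^ 2 := by gcongr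
    _ = ‖p‖ ^ 2 * ‖x - p‖ ^ 2 := by rw [V₂.norm_sq_sub_starProjection]; ring
    _ ≤ (c * ‖x‖) ^ 2 * ‖x - p‖ ^ 2 := by gcongr
    _ = ‖x‖ ^ 2 * (c * ‖x - p‖) ^ 2 := by ring

theorem inner_sub_starProjection_le_of_mem_orthogonal [V₁.HasOrthogonalProjection]
    [V₂.HasOrthogonalProjection] {x b : H} (hx₁ : x ∈ V₁) (hx : x ∈ (V₁ ⊓ V₂)ᗮ)
    (hb : b ∈ V₁ᗮ) :
    ⟪x - V₂.starProjection x, b⟫ ≤ friedrichsCos V₁ V₂ * ‖x - V₂.starProjection x‖ * ‖b‖ := by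
  set p := V₂.starProjection x
  set r := V₁.starProjection p
  have hshift : ⟪x - p, b⟫ = ⟪r - p, b⟫ := by
    rw [← sub_eq_zero, ← inner_sub_left, sub_sub_sub_cancel_right]
    exact inner_right_of_mem_orthogonal (V₁.sub_mem hx₁ (V₁.starProjection_apply_mem p)) hb
  calc ⟪x - p, b⟫ = ⟪r - p, b⟫ := hshift
    _ ≤ ‖p - r‖ * ‖b‖ := norm_sub_rev r p ▸ real_inner_le_norm _ _
    _ ≤ friedrichsCos V₁ V₂ * ‖x - p‖ * ‖b‖ := by
      gcongr
      exact norm_sub_starProjection_starProjection_le hx₁ hx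

theorem norm_sub_starProjection_le_friedrichsCos_mul_add [V₁.HasOrthogonalProjection]
    [V₂.HasOrthogonalProjection] {x : H} (hx₁ : x ∈ V₁) (hx : x ∈ (V₁ ⊓ V₂)ᗮ) (w : H)
    (hxw : x - V₁.starProjection w ∈ V₂) :
    ‖x - V₂.starProjection x‖ ≤
      friedrichsCos V₁ V₂ * ‖w - V₁.starProjection w‖ + ‖w - V₂.starProjection w‖ := by
  set g := x - V₂.starProjection x
  have hg : g ∈ V₂ᗮ := V₂.sub_starProjection_mem_orthogonal x
  have hgx : ‖g‖ ^ 2 = ⟪g, x⟫ := by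
    calc ‖g‖ ^ 2 = ⟪g, x - V₂.starProjection x⟫ := (real_inner_self_eq_norm_sq g).symm
      _ = ⟪g, x⟫ := by
        rw [inner_sub_right, inner_left_of_mem_orthogonal (V₂.starProjection_apply_mem x) hg,
          sub_zero]
  have hsplit : ⟪g, x⟫ = ⟪g, w - V₂.starProjection w⟫ + ⟪g, V₁.starProjection w - w⟫ := by
    rw [← inner_add_right, ← sub_eq_zero, ← inner_sub_right]
    refine inner_left_of_mem_orthogonal ?_ hg
    convert V₂.add_mem hxw (V₂.starProjection_apply_mem w) using 1
    abel
  have h₂ : ⟪g, w - V₂.starProjection w⟫ ≤ ‖g‖ * ‖w - V₂.starProjection w‖ :=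
    real_inner_le_norm _ _
  have h₁ : ⟪g, V₁.starProjection w - w⟫ ≤
      friedrichsCos V₁ V₂ * ‖g‖ * ‖w - V₁.starProjection w‖ := by
    rw [norm_sub_rev w]
    refine inner_sub_starProjection_le_of_mem_orthogonal hx₁ hx ?_
    simpa using V₁ᗮ.neg_mem (V₁.sub_starProjection_mem_orthogonal w)
  have := mul_nonneg (friedrichsCos_nonneg V₁ V₂) (norm_nonneg (w - V₁.starProjection w))
  nlinarith [norm_nonneg g, norm_nonneg (w - V₂.starProjection w)]

end FriedrichsAngle

theorem dist_proj_to_intersection_general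
    {H : Type*} [NormedAddCommGroup H] [InnerProductSpace ℝ H] [CompleteSpace H]
    (V₁ V₂ : Submodule ℝ H) (hV₂ : IsClosed (V₂ : Set H))
    [CompleteSpace V₁] [CompleteSpace (V₁ ⊓ V₂ : Submodule ℝ H)]
    (φ : ℝ) (hφ₀ : 0 < φ) (hφ₁ : φ ≤ Real.pi / 2)
    (hcos : Real.cos φ = friedrichsCos V₁ V₂) (w : H) :
    ‖(V₁.orthogonalProjectionOnto w : H) - ((V₁ ⊓ V₂ : Submodule ℝ H).orthogonalProjectionOnto w : H)‖ ≤
      (Real.cos φ * Metric.infDist w (V₁ : Set H) + Metric.infDist w (V₂ : Set H)) /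
        Real.sin φ := by
  have : CompleteSpace V₂ := hV₂.completeSpace_coe
  have hsin : 0 < Real.sin φ :=
    Real.sin_pos_of_pos_of_lt_pi hφ₀ (by linarith [Real.pi_pos])
  simp only [Submodule.coe_orthogonalProjectionOnto_apply,
    Submodule.infDist_eq_norm_sub_starProjection]
  set u := V₁.starProjection w - (V₁ ⊓ V₂).starProjection w
  have hu₁ : u ∈ V₁ := V₁.sub_mem (V₁.starProjection_apply_mem w)
    (Submodule.mem_inf.mp ((V₁ ⊓ V₂).starProjection_apply_mem w)).1
  have hu : u ∈ (V₁ ⊓ V₂)ᗮ :=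
    Submodule.starProjection_sub_starProjection_mem_orthogonal inf_le_left w
  have huw : u - V₁.starProjection w ∈ V₂ := by
    simpa [u] using V₂.neg_mem (Submodule.mem_inf.mp ((V₁ ⊓ V₂).starProjection_apply_mem w)).2
  rw [le_div_iff₀ hsin, mul_comm, hcos]
  exact (sin_mul_norm_le_norm_sub_starProjection hcos hsin.le hu₁ hu).trans
    (norm_sub_starProjection_le_friedrichsCos_mul_add hu₁ hu w huw)

theorem dist_proj_to_intersection
    {H : Type*} [NormedAddCommGroup H] [InnerProductSpace ℝ H] [CompleteSpace H]
    (V₁ V₂ : Submodule ℝ H) (hV₁ : IsClosed (V₁ : Set H)) (hV₂ : IsClosed (V₂ : Set H))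
    [CompleteSpace V₁] [CompleteSpace (V₁ ⊓ V₂ : Submodule ℝ H)]
    (φ : ℝ) (hφ₀ : 0 < φ) (hφ₁ : φ ≤ Real.pi / 2)
    (hcos : Real.cos φ = friedrichsCos V₁ V₂) (w : H) :
    ‖(V₁.orthogonalProjectionOnto w : H) - ((V₁ ⊓ V₂ : Submodule ℝ H).orthogonalProjectionOnto w : H)‖ ≤
      (Real.cos φ * Metric.infDist w (V₁ : Set H) + Metric.infDist w (V₂ : Set H)) /
        Real.sin φ :=
  dist_proj_to_intersection_general V₁ V₂ hV₂ φ hφ₀ hφ₁ hcos w
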